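/- In the maze MDP on ℤ² with obstacle set O a finite union of open axis-aligned rectangles, suppose s ∉ O and the goal g lies in the surface S(s). Then V*_M(s) = d(s,g), the Manhattan distance, achieved by the direct axis-aligned path. -/
import Mathlib


open scoped BigOperators

namespace Maze

/-- Points of the `d`-dimensional integer maze. -/
abbrev Pt (d : ℕ) := Fin d → ℤ

/-- An open axis-aligned hyperrectangular obstacle determined by `a, b`. -/
def Obst {d : ℕ} (a b : Pt d) : Set (Pt d) := {x | ∀ i, a i < x i ∧ x i < b i}

/-- The union of the `k` obstacles. -/
def OSet {d k : ℕ} (a b : Fin k → Pt d) : Set (Pt d) := ⋃ j, Obst (a j) (b j)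

/-- The list of `i`-th coordinates of obstacle boundaries together with the goal coordinate. -/
def Lists {d k : ℕ} (a b : Fin k → Pt d) (g : Pt d) (i : Fin d) : Finset ℤ :=
  (Finset.univ.image fun j => a j i) ∪ (Finset.univ.image fun j => b j i) ∪ {g i}

/-- The surface (closed grid cell) of a point `x` with respect to coordinate lists `L`:
`y` lies in the surface iff in every coordinate `i`, `y i` equals `x i` when `x i` is a
grid value, and otherwise `y i` lies between the grid values surrounding `x i`. -/
def Surf {d : ℕ} (L : Fin d → Finset ℤ) (x : Pt d) : Set (Pt d) :=
  {y | ∀ i, (x i ∈ L i → y i = x i) ∧ (∀ l ∈ L i, l < x i → l ≤ y i) ∧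
      (∀ l ∈ L i, x i < l → y i ≤ l)}

/-- Corners: points all of whose coordinates are grid values. -/
def Corners {d : ℕ} (L : Fin d → Finset ℤ) : Set (Pt d) := {c | ∀ i, c i ∈ L i}

/-- Manhattan distance. -/
def manh {d : ℕ} (s t : Pt d) : ℕ := ∑ i, (s i - t i).natAbs

/-- A unit move in a single coordinate. -/
def Step {d : ℕ} (x y : Pt d) : Prop :=
  ∃ i, (y i = x i + 1 ∨ y i = x i - 1) ∧ ∀ j, j ≠ i → y j = x j

/-- A maze path of length `n` from `s` to `t` avoiding the obstacle set `O`. -/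
def IsMazePath {d : ℕ} (O : Set (Pt d)) (f : ℕ → Pt d) (n : ℕ) (s t : Pt d) : Prop :=
  f 0 = s ∧ f n = t ∧ (∀ m, m < n → Step (f m) (f (m + 1))) ∧ (∀ m, m ≤ n → f m ∉ O)

/-- Minimal number of steps of an obstacle-avoiding maze path from `s` to `t`
(`⊤` if there is none). -/
noncomputable def mazeDist {d : ℕ} (O : Set (Pt d)) (s t : Pt d) : ℕ∞ :=
  sInf {N : ℕ∞ | ∃ n : ℕ, N = n ∧ ∃ f, IsMazePath O f n s t}

/-- Two corners are adjacent if they agree in all coordinates except one, where their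
values are consecutive elements of the corresponding list, and the axis-aligned segment
between them avoids the obstacles. -/
def Adjacent {d : ℕ} (L : Fin d → Finset ℤ) (O : Set (Pt d)) (c c' : Pt d) : Prop :=
  c ∈ Corners L ∧ c' ∈ Corners L ∧
  ∃ i, c i ≠ c' i ∧ (∀ j, j ≠ i → c j = c' j) ∧
    (∀ l ∈ L i, ¬(min (c i) (c' i) < l ∧ l < max (c i) (c' i))) ∧
    (∀ z : Pt d, (∀ j, j ≠ i → z j = c j) →
      min (c i) (c' i) ≤ z i → z i ≤ max (c i) (c' i) → z ∉ O)

/-- Shortest-path distance from `s` to `t` in the weighted corner graph, with edges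
between adjacent corners weighted by their Manhattan distance. -/
noncomputable def cornerDist {d : ℕ} (L : Fin d → Finset ℤ) (O : Set (Pt d))
    (s t : Pt d) : ℕ∞ :=
  sInf {N : ℕ∞ | ∃ (n : ℕ) (c : ℕ → Pt d), c 0 = s ∧ c n = t ∧
    (∀ m, m < n → Adjacent L O (c m) (c (m + 1))) ∧
    N = ∑ m ∈ Finset.range n, (manh (c m) (c (m + 1)) : ℕ∞)}

def walk (x y : ℤ) (t : ℕ) : ℤ := if x ≤ y then min (x + t) y else max (x - t) y
lemma walk_zero (x y : ℤ) : walk x y 0 = x := by unfold walk; split <;> omega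
lemma walk_last (x y : ℤ) (t : ℕ) (h : (x - y).natAbs ≤ t) : walk x y t = y := by
  unfold walk; split <;> omega
lemma walk_mem (x y : ℤ) (t : ℕ) : min x y ≤ walk x y t ∧ walk x y t ≤ max x y := by
  unfold walk; split <;> omega
lemma walk_step (x y : ℤ) (t : ℕ) (h : t < (x - y).natAbs) :
    walk x y (t + 1) = walk x y t + 1 ∨ walk x y (t + 1) = walk x y t - 1 := by
  unfold walk; split
  · left; push_cast; omega
  · right; push_cast; omega

lemma box_avoid {k : ℕ} (a b : Fin k → Pt 2) (g s : Pt 2) (hs : s ∉ OSet a b)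
    (hg : g ∈ Surf (Lists a b g) s) (z : Pt 2)
    (hz : ∀ i, min (s i) (g i) ≤ z i ∧ z i ≤ max (s i) (g i)) : z ∉ OSet a b := by
  intro hzO
  rw [OSet, Set.mem_iUnion] at hzO
  obtain ⟨j, hj⟩ := hzO
  have hsj : s ∉ Obst (a j) (b j) := fun h => hs (Set.mem_iUnion.2 ⟨j, h⟩)
  rw [Obst, Set.mem_setOf_eq] at hsj hj
  push_neg at hsj
  obtain ⟨i, hi⟩ := hsj
  have hA : a j i ∈ Lists a b g i := by
    simp only [Lists, Finset.mem_union, Finset.mem_image]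
    exact Or.inl (Or.inl ⟨j, Finset.mem_univ j, rfl⟩)
  have hB : b j i ∈ Lists a b g i := by
    simp only [Lists, Finset.mem_union, Finset.mem_image]
    exact Or.inl (Or.inr ⟨j, Finset.mem_univ j, rfl⟩)
  have hji := hj i
  have hzi := hz i
  rcases lt_or_ge (s i) (b j i) with hc | hc
  · have hsa : s i ≤ a j i := by
      by_contra h
      exact absurd (hi (by omega)) (by omega)
    rcases eq_or_lt_of_le hsa with heq | hlt
    · have := (hg i).1 (heq ▸ hA)
      omega
    · have := (hg i).2.2 (a j i) hA hlt
      omega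
  · rcases eq_or_lt_of_le hc with heq | hlt
    · have := (hg i).1 (heq ▸ hB)
      omega
    · have := (hg i).2.1 (b j i) hB hlt
      omega

lemma manh_triangle {d : ℕ} (x y t : Pt d) : manh x t ≤ manh x y + manh y t := by
  unfold manh
  rw [← Finset.sum_add_distrib]
  exact Finset.sum_le_sum fun i _ => by omega

lemma manh_step {d : ℕ} (x y : Pt d) (h : Step x y) : manh x y = 1 := by
  obtain ⟨i, hi, hj⟩ := h
  unfold manh
  rw [Finset.sum_eq_single i]
  · omega
  · intro j _ hne
    rw [hj j hne]; omega
  · simp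

lemma manh_le_of_path {d : ℕ} (O : Set (Pt d)) (f : ℕ → Pt d) (n : ℕ) (s t : Pt d)
    (h : IsMazePath O f n s t) : manh s t ≤ n := by
  obtain ⟨h0, hn, hstep, -⟩ := h
  have key : ∀ m, m ≤ n → manh (f (n - m)) t ≤ m := by
    intro m
    induction m with
    | zero => intro _; simp [Nat.sub_zero, hn, manh]
    | succ m ih =>
      intro hm
      have h1 : n - (m + 1) < n := by omega
      have h2 : n - (m + 1) + 1 = n - m := by omega
      have hst := hstep _ h1
      rw [h2] at hst
      calc manh (f (n - (m + 1))) t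
          ≤ manh (f (n - (m + 1))) (f (n - m)) + manh (f (n - m)) t := manh_triangle _ _ _
        _ ≤ 1 + m := by
            have := manh_step _ _ hst
            have := ih (by omega)
            omega
        _ = m + 1 := by omega
  have := key n le_rfl
  simpa [h0] using this

lemma direct_path {k : ℕ} (a b : Fin k → Pt 2) (g : Pt 2)
    (s : Pt 2) (hs : s ∉ OSet a b) (hg : g ∈ Surf (Lists a b g) s) :
    ∃ f : ℕ → Pt 2, IsMazePath (OSet a b) f (manh s g) s g := by
  set m0 := (s 0 - g 0).natAbs with hm0
  set m1 := (s 1 - g 1).natAbs with hm1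
  have hmanh : manh s g = m0 + m1 := by simp [manh, Fin.sum_univ_two, hm0, hm1]
  refine ⟨fun m => ![walk (s 0) (g 0) m, walk (s 1) (g 1) (m - m0)], ?_, ?_, ?_, ?_⟩
  · funext i
    fin_cases i
    · show walk (s 0) (g 0) 0 = s 0
      exact walk_zero _ _
    · show walk (s 1) (g 1) (0 - m0) = s 1
      rw [Nat.zero_sub]; exact walk_zero _ _
  · funext i
    fin_cases i
    · show walk (s 0) (g 0) (manh s g) = g 0
      exact walk_last _ _ _ (by omega)
    · show walk (s 1) (g 1) (manh s g - m0) = g 1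
      exact walk_last _ _ _ (by omega)
  · intro m hm
    rw [hmanh] at hm
    rcases lt_or_ge m m0 with hlt | hge
    · refine ⟨0, ?_, ?_⟩
      · show walk (s 0) (g 0) (m+1) = walk (s 0) (g 0) m + 1 ∨
            walk (s 0) (g 0) (m+1) = walk (s 0) (g 0) m - 1
        exact walk_step (s 0) (g 0) m hlt
      · intro j hj
        fin_cases j
        · exact absurd rfl hj
        · show walk (s 1) (g 1) (m + 1 - m0) = walk (s 1) (g 1) (m - m0)
          have h1 : m + 1 - m0 = m - m0 := by omega
          rw [h1]
    · refine ⟨1, ?_, ?_⟩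
      · show walk (s 1) (g 1) (m + 1 - m0) = walk (s 1) (g 1) (m - m0) + 1 ∨
            walk (s 1) (g 1) (m + 1 - m0) = walk (s 1) (g 1) (m - m0) - 1
        have h1 : m + 1 - m0 = (m - m0) + 1 := by omega
        rw [h1]
        exact walk_step (s 1) (g 1) (m - m0) (by omega)
      · intro j hj
        fin_cases j
        · show walk (s 0) (g 0) (m+1) = walk (s 0) (g 0) m
          rw [walk_last (s 0) (g 0) (m+1) (by omega), walk_last (s 0) (g 0) m (by omega)]
        · exact absurd rfl hj
  · intro m _
    apply box_avoid a b g s hs hg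
    intro i
    fin_cases i
    · show min (s 0) (g 0) ≤ walk (s 0) (g 0) m ∧ walk (s 0) (g 0) m ≤ max (s 0) (g 0)
      exact walk_mem (s 0) (g 0) m
    · show min (s 1) (g 1) ≤ walk (s 1) (g 1) (m - m0) ∧
          walk (s 1) (g 1) (m - m0) ≤ max (s 1) (g 1)
      exact walk_mem (s 1) (g 1) (m - m0)

/-- in a 2-dimensional maze, if `s ∉ O` and the goal `g` lies in the surface
of `s`, then the optimal value is the Manhattan distance, achieved by a direct
axis-aligned path. -/
theorem value_eq_manhattan_of_goal_in_surface {k : ℕ} (a b : Fin k → Pt 2) (g : Pt 2)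
    (s : Pt 2) (hs : s ∉ OSet a b) (hg : g ∈ Surf (Lists a b g) s) :
    mazeDist (OSet a b) s g = (manh s g : ℕ∞) ∧
    ∃ f : ℕ → Pt 2, IsMazePath (OSet a b) f (manh s g) s g := by
  obtain ⟨f, hf⟩ := direct_path a b g s hs hg
  refine ⟨le_antisymm ?_ ?_, f, hf⟩
  · exact sInf_le ⟨manh s g, rfl, f, hf⟩
  · refine le_sInf ?_
    rintro N ⟨n, rfl, f2, hf2⟩
    exact_mod_cast manh_le_of_path _ f2 n s g hf2

end Maze
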